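/- A quasi-metric space (X,d) has the property that every bounded ideal of (X,d) has a colimit if and only if every bounded forward Cauchy net in (X,d) has a Yoneda limit. -/

import Mathlib

open scoped ENNReal NNReal

universe u v w

/-- A quasi-metric space structure on `X`: distances valued in `[0,∞]`, with
`d x x = 0`, the triangle inequality, and separatedness. -/
structure QuasiMetric (X : Type u) where
  d : X → X → ℝ≥0∞
  d_self : ∀ x, d x x = 0
  d_triangle : ∀ x y z, d x z ≤ d x y + d y z
  d_separated : ∀ x y, d x y = 0 → d y x = 0 → x = y

namespace QuasiMetric

variable {X : Type u}

/-- The order on formal balls: `(x, r) ⊑ (y, s)` iff `s + d x y ≤ r`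
(equivalently `d x y ≤ r - s`). -/
def ballLE (q : QuasiMetric X) (p p' : X × ℝ≥0) : Prop :=
  (p'.2 : ℝ≥0∞) + q.d p.1 p'.1 ≤ (p.2 : ℝ≥0∞)

/-- `b` is a least upper bound of the set `S` of formal balls. -/
def IsBallLUB (q : QuasiMetric X) (S : Set (X × ℝ≥0)) (b : X × ℝ≥0) : Prop :=
  (∀ p ∈ S, q.ballLE p b) ∧ ∀ c, (∀ p ∈ S, q.ballLE p c) → q.ballLE b c

/-- `le` is a directed preorder (reflexive, transitive, directed). -/
def DirectedPre {D : Type v} (le : D → D → Prop) : Prop :=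
  (∀ i, le i i) ∧ (∀ i j k, le i j → le j k → le i k) ∧ ∀ i j, ∃ k, le i k ∧ le j k

/-- A net `x : D → X` is forward Cauchy: `inf_i sup_{k ≥ j ≥ i} d (x j) (x k) = 0`. -/
def ForwardCauchy (q : QuasiMetric X) {D : Type v} (le : D → D → Prop) (x : D → X) : Prop :=
  (⨅ i, ⨆ j, ⨆ (_ : le i j), ⨆ k, ⨆ (_ : le j k), q.d (x j) (x k)) = 0

/-- `a` is a Yoneda limit of the net `x : D → X`:
for all `y`, `d a y = inf_i sup_{j ≥ i} d (x j) y`. -/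
def IsYonedaLimit (q : QuasiMetric X) {D : Type v} (le : D → D → Prop) (x : D → X) (a : X) :
    Prop :=
  ∀ y, q.d a y = ⨅ i, ⨆ j, ⨆ (_ : le i j), q.d (x j) y

/-- `(X, d)` is Yoneda complete: every forward Cauchy net has a Yoneda limit. -/
def YonedaComplete (q : QuasiMetric X) : Prop :=
  ∀ (D : Type u) (le : D → D → Prop), DirectedPre le → Nonempty D →
    ∀ x : D → X, q.ForwardCauchy le x → ∃ a, q.IsYonedaLimit le x a

/-- `(X, d)` is standard: whenever a directed set of formal balls (viewed as a monotone
net indexed by itself) has a least upper bound, the corresponding forward Cauchy net of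
centers has a Yoneda limit. -/
def Standard (q : QuasiMetric X) : Prop :=
  ∀ S : Set (X × ℝ≥0), S.Nonempty → DirectedOn q.ballLE S →
    (∃ b, q.IsBallLUB S b) →
    ∃ a, q.IsYonedaLimit (fun p p' : ↥S => q.ballLE p.1 p'.1) (fun p : ↥S => p.1.1) a

/-- A weight of `(X, d)`: `φ x ≤ φ y + d x y`. -/
def IsWeight (q : QuasiMetric X) (φ : X → ℝ≥0∞) : Prop :=
  ∀ x y, φ x ≤ φ y + q.d x y

/-- The quasi-metric on weights: `ρ(φ, ψ) = sup_y (ψ y ⊖ φ y)`. -/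
noncomputable def rho {Y : Type v} (φ ψ : Y → ℝ≥0∞) : ℝ≥0∞ := ⨆ y, ψ y - φ y

/-- An ideal of `(X, d)`: a weight `φ` with `inf φ = 0` such that
`ρ(φ, min (λ, μ)) = min (ρ(φ,λ), ρ(φ,μ))` for all weights `λ`, `μ`. -/
def IsIdeal (q : QuasiMetric X) (φ : X → ℝ≥0∞) : Prop :=
  q.IsWeight φ ∧ (⨅ x, φ x) = 0 ∧
    ∀ l m : X → ℝ≥0∞, q.IsWeight l → q.IsWeight m →
      rho φ (fun x => min (l x) (m x)) = min (rho φ l) (rho φ m)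

/-- A weight `φ` is bounded: there are `r < ∞` and `a ∈ X` with `d x a ≤ r + φ x` for all `x`. -/
def BoundedWeight (q : QuasiMetric X) (φ : X → ℝ≥0∞) : Prop :=
  ∃ (r : ℝ≥0) (a : X), ∀ x, q.d x a ≤ (r : ℝ≥0∞) + φ x

/-- `b` is a colimit of the weight `φ`: for all `y`, `d b y = sup_x (d x y ⊖ φ x)`. -/
def IsColimit (q : QuasiMetric X) (φ : X → ℝ≥0∞) (b : X) : Prop :=
  ∀ y, q.d b y = ⨆ x, q.d x y - φ x

/-- The poset of formal balls is a dcpo: every (nonempty) directed subset has a lub. -/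
def BallDcpo (q : QuasiMetric X) : Prop :=
  ∀ S : Set (X × ℝ≥0), S.Nonempty → DirectedOn q.ballLE S → ∃ b, q.IsBallLUB S b

/-- The poset of formal balls is a local dcpo: every (nonempty) directed subset with an
upper bound has a lub. -/
def BallLocalDcpo (q : QuasiMetric X) : Prop :=
  ∀ S : Set (X × ℝ≥0), S.Nonempty → DirectedOn q.ballLE S →
    (∃ c, ∀ p ∈ S, q.ballLE p c) → ∃ b, q.IsBallLUB S b

/-- `u` is way below `v` in the poset of formal balls. -/
def ballWayBelow (q : QuasiMetric X) (u v : X × ℝ≥0) : Prop :=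
  ∀ S : Set (X × ℝ≥0), S.Nonempty → DirectedOn q.ballLE S →
    ∀ s, q.IsBallLUB S s → q.ballLE v s → ∃ p ∈ S, q.ballLE u p

/-- The poset of formal balls is a continuous poset: for every `p`, the set of elements
way below `p` is (nonempty) directed and has `p` as its least upper bound. -/
def BallContinuousPoset (q : QuasiMetric X) : Prop :=
  ∀ p : X × ℝ≥0,
    {u : X × ℝ≥0 | q.ballWayBelow u p}.Nonempty ∧
    DirectedOn q.ballLE {u : X × ℝ≥0 | q.ballWayBelow u p} ∧
    q.IsBallLUB {u : X × ℝ≥0 | q.ballWayBelow u p} p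

/-- A function `χ` is `𝓙`-closed: `ρ(ψ, χ) ≥ χ (colim ψ)` for every bounded ideal `ψ`
possessing a colimit. -/
def JClosed (q : QuasiMetric X) (χ : X → ℝ≥0∞) : Prop :=
  ∀ ψ : X → ℝ≥0∞, q.IsIdeal ψ → q.BoundedWeight ψ → ∀ c, q.IsColimit ψ c → χ c ≤ rho ψ χ

/-- `(X, d)` is a continuous `𝕁`-algebra: every bounded ideal has a colimit, and there is
a map `⇓` assigning to each `x` a bounded ideal `⇓x` with `ρ(⇓x, φ) = d x (colim φ)` for
all `x` and all bounded ideals `φ`. -/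
def ContinuousJAlgebra (q : QuasiMetric X) : Prop :=
  ∃ colim : (X → ℝ≥0∞) → X,
    (∀ φ, q.IsIdeal φ → q.BoundedWeight φ → q.IsColimit φ (colim φ)) ∧
    ∃ w : X → X → ℝ≥0∞,
      (∀ x, q.IsIdeal (w x) ∧ q.BoundedWeight (w x)) ∧
      ∀ (x : X) (φ : X → ℝ≥0∞), q.IsIdeal φ → q.BoundedWeight φ →
        rho (w x) φ = q.d x (colim φ)

/-- The quasi-metric space of all functions `X → [0,∞]` satisfying a predicate `P`
(e.g. the bounded weights, or the bounded ideals), with the quasi-metric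
`ρ(φ, ψ) = sup_x (ψ x ⊖ φ x)`. -/
noncomputable def weightSpace (q : QuasiMetric X) (P : (X → ℝ≥0∞) → Prop) :
    QuasiMetric {φ : X → ℝ≥0∞ // P φ} where
  d φ ψ := rho φ.1 ψ.1
  d_self φ := by simp [rho]
  d_triangle φ ψ χ := by
    refine iSup_le fun x => ?_
    calc χ.1 x - φ.1 x ≤ (χ.1 x - ψ.1 x) + (ψ.1 x - φ.1 x) := tsub_le_tsub_add_tsub
    _ ≤ rho ψ.1 χ.1 + rho φ.1 ψ.1 :=
        add_le_add (le_iSup (fun y => χ.1 y - ψ.1 y) x) (le_iSup (fun y => ψ.1 y - φ.1 y) x)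
    _ = rho φ.1 ψ.1 + rho ψ.1 χ.1 := add_comm _ _
  d_separated φ ψ h1 h2 := by
    apply Subtype.ext
    funext x
    have hx1 : ψ.1 x - φ.1 x ≤ 0 := by
      rw [← h1]; exact le_iSup (fun y => ψ.1 y - φ.1 y) x
    have hx2 : φ.1 x - ψ.1 x ≤ 0 := by
      rw [← h2]; exact le_iSup (fun y => φ.1 y - ψ.1 y) x
    exact le_antisymm (tsub_eq_zero_iff_le.mp (le_antisymm hx2 (by simp)))
      (tsub_eq_zero_iff_le.mp (le_antisymm hx1 (by simp)))

end QuasiMetric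

/-! A forward Cauchy net `x` determines the weight `φₓ y = inf_i sup_{j ≥ i} d y (x j)`. It is an
ideal, it is bounded exactly when the net is, and its colimits are exactly the Yoneda limits of
`x`. Conversely every ideal `φ` is of this form: by flatness, the formal balls `(y, r)` with
`φ y < r` form a directed set, and the net of their centres is forward Cauchy with `φₓ = φ`. -/

namespace QuasiMetric

variable {X : Type u}

theorem ballLE_refl (q : QuasiMetric X) (p : X × ℝ≥0) : q.ballLE p p := by
  simp [ballLE, q.d_self]

section

variable {q : QuasiMetric X}

theorem ballLE_trans {p p' p'' : X × ℝ≥0} (h : q.ballLE p p') (h' : q.ballLE p' p'') :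
    q.ballLE p p'' :=
  calc (p''.2 : ℝ≥0∞) + q.d p.1 p''.1 ≤ p''.2 + (q.d p.1 p'.1 + q.d p'.1 p''.1) := by
        gcongr; exact q.d_triangle _ _ _
  _ = (p''.2 + q.d p'.1 p''.1) + q.d p.1 p'.1 := by ring
  _ ≤ p'.2 + q.d p.1 p'.1 := by gcongr; exact h'
  _ ≤ p.2 := h

theorem ballLE.radius_le {p p' : X × ℝ≥0} (h : q.ballLE p p') : (p'.2 : ℝ≥0∞) ≤ p.2 :=
  le_self_add.trans h

theorem ballLE.d_le {p p' : X × ℝ≥0} (h : q.ballLE p p') : q.d p.1 p'.1 ≤ p.2 :=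
  le_add_self.trans h

end

section

variable (q : QuasiMetric X)

theorem isWeight_d_left (y : X) : q.IsWeight fun z => q.d z y :=
  fun z z' => (q.d_triangle z z' y).trans_eq (add_comm _ _)

theorem isWeight_tsub_d (x : X) (r : ℝ≥0∞) : q.IsWeight fun z => r - q.d x z := fun z z' =>
  calc r - q.d x z ≤ (r - q.d x z') + (q.d x z' - q.d x z) := tsub_le_tsub_add_tsub
  _ ≤ (r - q.d x z') + q.d z z' := by
      gcongr; exact tsub_le_iff_left.mpr (q.d_triangle x z z')

end

namespace DirectedPre

variable {D : Type v} {le : D → D → Prop}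

theorem exists_ge₃ (h : DirectedPre le) (i j k : D) : ∃ l, le i l ∧ le j l ∧ le k l := by
  obtain ⟨-, htrans, hdir⟩ := h
  obtain ⟨m, him, hjm⟩ := hdir i j
  obtain ⟨l, hml, hkl⟩ := hdir m k
  exact ⟨l, htrans _ _ _ him hml, htrans _ _ _ hjm hml, hkl⟩

end DirectedPre

section NetWeight

variable (q : QuasiMetric X) {D : Type v} (le : D → D → Prop) (x : D → X)

noncomputable def netWeight (y : X) : ℝ≥0∞ :=
  ⨅ i, ⨆ j, ⨆ (_ : le i j), q.d y (x j)

def BoundedNet : Prop :=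
  ∃ (a : X) (r : ℝ≥0), ∀ (z : X) (i : D), ∃ j, le i j ∧ q.d z a ≤ (r : ℝ≥0∞) + q.d z (x j)

variable {q le x}

theorem le_iSup_tail (f : D → ℝ≥0∞) {i j : D} (hij : le i j) :
    f j ≤ ⨆ j', ⨆ (_ : le i j'), f j' :=
  le_iSup₂ (f := fun j' (_ : le i j') => f j') j hij

theorem netWeight_le_iSup (y : X) (i : D) :
    q.netWeight le x y ≤ ⨆ j, ⨆ (_ : le i j), q.d y (x j) :=
  iInf_le _ i

variable (q le x)

theorem isWeight_netWeight : q.IsWeight (q.netWeight le x) := by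
  intro z w
  simp only [netWeight, ENNReal.iInf_add]
  refine le_iInf fun i => (netWeight_le_iSup z i).trans (iSup₂_le fun j hij => ?_)
  calc q.d z (x j) ≤ q.d w (x j) + q.d z w := (q.d_triangle z w (x j)).trans_eq (add_comm _ _)
  _ ≤ _ := by gcongr; exact le_iSup_tail (fun j => q.d w (x j)) hij

variable {q le x}

theorem exists_tsub_netWeight_le [Nonempty D] {l : X → ℝ≥0∞} (hl : q.IsWeight l) (u : X)
    {ε : ℝ≥0∞} (hε : ε ≠ 0) :
    ∃ i, ∀ j, le i j → l u - q.netWeight le x u ≤ l (x j) + ε := by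
  by_cases htop : q.netWeight le x u = ∞
  · exact ⟨Classical.arbitrary D, fun j _ => by simp [htop]⟩
  obtain ⟨i, hi⟩ := iInf_lt_iff.mp (ENNReal.lt_add_right htop hε)
  refine ⟨i, fun j hij => tsub_le_iff_right.mpr ?_⟩
  calc l u ≤ l (x j) + q.d u (x j) := hl u (x j)
  _ ≤ l (x j) + (q.netWeight le x u + ε) := by
      gcongr; exact ((le_iSup_tail (fun j => q.d u (x j)) hij).trans_lt hi).le
  _ = l (x j) + ε + q.netWeight le x u := by ring

namespace ForwardCauchy

theorem nonempty (hx : q.ForwardCauchy le x) : Nonempty D := by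
  by_contra h
  rw [not_nonempty_iff] at h
  simp [ForwardCauchy, iInf_of_empty] at hx

theorem exists_tail_le (hx : q.ForwardCauchy le x) {ε : ℝ≥0∞} (hε : ε ≠ 0) :
    ∃ i, ∀ j k, le i j → le j k → q.d (x j) (x k) ≤ ε := by
  obtain ⟨i, hi⟩ := iInf_lt_iff.mp (hx.trans_lt (pos_iff_ne_zero.mpr hε))
  exact ⟨i, fun j k hij hjk =>
    ((le_iSup₂_of_le j hij (le_iSup_tail (fun k => q.d (x j) (x k)) hjk)).trans_lt hi).le⟩

theorem exists_netWeight_le (hx : q.ForwardCauchy le x) {ε : ℝ≥0∞} (hε : ε ≠ 0) :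
    ∃ i, ∀ j, le i j → q.netWeight le x (x j) ≤ ε := by
  obtain ⟨i, hi⟩ := hx.exists_tail_le hε
  exact ⟨i, fun j hij => (netWeight_le_iSup _ j).trans (iSup₂_le fun k hjk => hi j k hij hjk)⟩

theorem iInf_netWeight (hx : q.ForwardCauchy le x) (hrefl : ∀ i, le i i) :
    ⨅ y, q.netWeight le x y = 0 := by
  refine le_antisymm (ENNReal.le_of_forall_pos_le_add fun ε hε _ => ?_) zero_le
  obtain ⟨i, hi⟩ := hx.exists_netWeight_le (ENNReal.coe_ne_zero.mpr hε.ne')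
  exact (iInf_le _ (x i)).trans ((hi i (hrefl i)).trans_eq (zero_add _).symm)

end ForwardCauchy

end NetWeight

namespace ForwardCauchy

variable {q : QuasiMetric X} {D : Type v} {le : D → D → Prop} {x : D → X}

theorem rho_netWeight_min (hx : q.ForwardCauchy le x) (hD : DirectedPre le)
    {l m : X → ℝ≥0∞} (hl : q.IsWeight l) (hm : q.IsWeight m) :
    rho (q.netWeight le x) (fun y => min (l y) (m y)) =
      min (rho (q.netWeight le x) l) (rho (q.netWeight le x) m) := by
  have := hx.nonempty
  set φ := q.netWeight le x
  refine le_antisymm (le_min (iSup_mono fun w => tsub_le_tsub_right (min_le_left _ _) _)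
    (iSup_mono fun w => tsub_le_tsub_right (min_le_right _ _) _)) ?_
  refine (iSup_inf_iSup (f := fun u => l u - φ u) (g := fun v => m v - φ v)).trans_le
    (iSup_le fun ⟨u, v⟩ => ENNReal.le_of_forall_pos_le_add fun ε hε _ => ?_)
  have hε2 : ((ε / 2 : ℝ≥0) : ℝ≥0∞) ≠ 0 := by simpa using hε.ne'
  obtain ⟨iu, hiu⟩ := exists_tsub_netWeight_le (x := x) hl u hε2
  obtain ⟨iv, hiv⟩ := exists_tsub_netWeight_le (x := x) hm v hε2
  obtain ⟨ic, hic⟩ := hx.exists_netWeight_le hε2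
  obtain ⟨k, huk, hvk, hck⟩ := hD.exists_ge₃ iu iv ic
  calc min (l u - φ u) (m v - φ v)
      ≤ min (l (x k) + (ε / 2 : ℝ≥0)) (m (x k) + (ε / 2 : ℝ≥0)) :=
        min_le_min (hiu k huk) (hiv k hvk)
  _ = min (l (x k)) (m (x k)) + (ε / 2 : ℝ≥0) := min_add_add_right _ _ _
  _ ≤ (min (l (x k)) (m (x k)) - φ (x k)) + φ (x k) + (ε / 2 : ℝ≥0) := by
      gcongr; exact le_tsub_add
  _ ≤ rho φ (fun y => min (l y) (m y)) + (ε / 2 : ℝ≥0) + (ε / 2 : ℝ≥0) := by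
      gcongr
      · exact le_iSup (fun y => min (l y) (m y) - φ y) (x k)
      · exact hic k hck
  _ = rho φ (fun y => min (l y) (m y)) + ε := by
      rw [add_assoc, ← ENNReal.coe_add, add_halves]

theorem isIdeal_netWeight (hx : q.ForwardCauchy le x) (hD : DirectedPre le) :
    q.IsIdeal (q.netWeight le x) :=
  ⟨q.isWeight_netWeight le x, hx.iInf_netWeight hD.1,
    fun _ _ hl hm => hx.rho_netWeight_min hD hl hm⟩

theorem iInf_iSup_d_eq_iSup_tsub (hx : q.ForwardCauchy le x) (hdir : ∀ i j, ∃ k, le i k ∧ le j k)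
    (y : X) :
    ⨅ i, ⨆ j, ⨆ (_ : le i j), q.d (x j) y = ⨆ w, q.d w y - q.netWeight le x w := by
  have := hx.nonempty
  apply le_antisymm
  · refine ENNReal.le_of_forall_pos_le_add fun ε hε _ => ?_
    obtain ⟨i, hi⟩ := hx.exists_netWeight_le (ENNReal.coe_ne_zero.mpr hε.ne')
    refine (iInf_le _ i).trans (iSup₂_le fun j hij => ?_)
    calc q.d (x j) y ≤ (q.d (x j) y - q.netWeight le x (x j)) + q.netWeight le x (x j) :=
          le_tsub_add
    _ ≤ (⨆ w, q.d w y - q.netWeight le x w) + ε :=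
          add_le_add (le_iSup_of_le (x j) le_rfl) (hi j hij)
  · refine iSup_le fun w => le_iInf fun i => ENNReal.le_of_forall_pos_le_add fun ε hε _ => ?_
    obtain ⟨i', hi'⟩ :=
      exists_tsub_netWeight_le (x := x) (q.isWeight_d_left y) w (ENNReal.coe_ne_zero.mpr hε.ne')
    obtain ⟨j, hij, hi'j⟩ := hdir i i'
    exact (hi' j hi'j).trans (by gcongr; exact le_iSup_tail (fun j => q.d (x j) y) hij)

theorem isYonedaLimit_iff_isColimit (hx : q.ForwardCauchy le x)
    (hdir : ∀ i j, ∃ k, le i k ∧ le j k) (a : X) :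
    q.IsYonedaLimit le x a ↔ q.IsColimit (q.netWeight le x) a := by
  simp only [IsYonedaLimit, IsColimit, hx.iInf_iSup_d_eq_iSup_tsub hdir]

theorem boundedNet_iff (hx : q.ForwardCauchy le x) (hdir : ∀ i j, ∃ k, le i k ∧ le j k) :
    q.BoundedNet le x ↔ q.BoundedWeight (q.netWeight le x) := by
  constructor
  · rintro ⟨a, r, ha⟩
    refine ⟨r, a, fun z => ?_⟩
    rw [netWeight, ENNReal.add_iInf]
    refine le_iInf fun i => ?_
    obtain ⟨j, hij, hj⟩ := ha z i
    exact hj.trans (by gcongr; exact le_iSup_tail (fun j => q.d z (x j)) hij)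
  · rintro ⟨r, a, ha⟩
    obtain ⟨i₀, hi₀⟩ := hx.exists_netWeight_le one_ne_zero
    refine ⟨a, r + 1, fun z i => ?_⟩
    obtain ⟨j, hij, hi₀j⟩ := hdir i i₀
    refine ⟨j, hij, ?_⟩
    calc q.d z a ≤ q.d z (x j) + q.d (x j) a := q.d_triangle _ _ _
    _ ≤ q.d z (x j) + (r + 1) := by
        gcongr; exact (ha (x j)).trans (by gcongr; exact hi₀ j hi₀j)
    _ = ((r + 1 : ℝ≥0) : ℝ≥0∞) + q.d z (x j) := by push_cast; ring

end ForwardCauchy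

section Balls

variable {q : QuasiMetric X} {φ : X → ℝ≥0∞}

def ballsOf (φ : X → ℝ≥0∞) : Set (X × ℝ≥0) := {p | φ p.1 < p.2}

theorem exists_mem_ballsOf (hφ : ⨅ x, φ x = 0) {ε : ℝ≥0} (hε : 0 < ε) :
    ∃ x, (x, ε) ∈ ballsOf φ :=
  iInf_lt_iff.mp (hφ.trans_lt (ENNReal.coe_pos.mpr hε))

namespace IsIdeal

theorem directedOn_ballsOf (hφ : q.IsIdeal φ) : DirectedOn q.ballLE (ballsOf φ) := by
  rintro ⟨x, r⟩ (hx : φ x < r) ⟨y, s⟩ (hy : φ y < s)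
  obtain ⟨-, -, hflat⟩ := hφ
  have hpos : 0 < rho φ (fun z => min (r - q.d x z) (s - q.d y z)) := by
    rw [hflat _ _ (q.isWeight_tsub_d x r) (q.isWeight_tsub_d y s)]
    refine lt_min ((tsub_pos_of_lt hx).trans_le (le_iSup_of_le x ?_))
      ((tsub_pos_of_lt hy).trans_le (le_iSup_of_le y ?_)) <;> simp [q.d_self]
  obtain ⟨z, hz⟩ := lt_iSup_iff.mp hpos
  obtain ⟨t, hzt, ht⟩ := ENNReal.lt_iff_exists_nnreal_btwn.mp (tsub_pos_iff_lt.mp hz)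
  exact ⟨(z, t), hzt, (lt_tsub_iff_right.mp (ht.trans_le (min_le_left _ _))).le,
    (lt_tsub_iff_right.mp (ht.trans_le (min_le_right _ _))).le⟩

theorem directedPre_ballsOf (hφ : q.IsIdeal φ) :
    DirectedPre fun p p' : ballsOf φ => q.ballLE p.1 p'.1 := by
  refine ⟨fun p => q.ballLE_refl p.1, fun _ _ _ => ballLE_trans, fun p p' => ?_⟩
  obtain ⟨z, hz, hpz, hp'z⟩ := hφ.directedOn_ballsOf p.1 p.2 p'.1 p'.2
  exact ⟨⟨z, hz⟩, hpz, hp'z⟩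

theorem forwardCauchy_ballsOf (hφ : q.IsIdeal φ) :
    q.ForwardCauchy (fun p p' : ballsOf φ => q.ballLE p.1 p'.1) fun p => p.1.1 := by
  refine le_antisymm (ENNReal.le_of_forall_pos_le_add fun ε hε _ => ?_) zero_le
  obtain ⟨x, hx⟩ := exists_mem_ballsOf hφ.2.1 hε
  refine (iInf_le _ ⟨(x, ε), hx⟩).trans ?_
  rw [zero_add]
  exact iSup₂_le fun j hj => iSup₂_le fun k hk => hk.d_le.trans hj.radius_le

theorem netWeight_ballsOf (hφ : q.IsIdeal φ) :
    q.netWeight (fun p p' : ballsOf φ => q.ballLE p.1 p'.1) (fun p => p.1.1) = φ := by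
  funext y
  rw [netWeight]
  apply le_antisymm
  · refine le_of_forall_gt_imp_ge_of_dense fun c hc => ?_
    obtain ⟨t, hyt, htc⟩ := ENNReal.lt_iff_exists_nnreal_btwn.mp hc
    refine (iInf_le _ ⟨(y, t), hyt⟩).trans ((iSup₂_le fun j hj => ?_).trans htc.le)
    exact hj.d_le
  · refine le_iInf fun i => ENNReal.le_of_forall_pos_le_add fun ε hε _ => ?_
    rw [add_comm]
    obtain ⟨x, hx⟩ := exists_mem_ballsOf hφ.2.1 hε
    obtain ⟨k, hk, hik, hxk⟩ := hφ.directedOn_ballsOf i.1 i.2 (x, ε) hx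
    calc φ y ≤ φ k.1 + q.d y k.1 := hφ.1 y k.1
    _ ≤ ε + ⨆ (j : ballsOf φ), ⨆ (_ : q.ballLE i.1 j.1), q.d y j.1.1 :=
        add_le_add ((show φ k.1 < k.2 from hk).le.trans hxk.radius_le)
          (le_iSup_tail (le := fun p p' : ballsOf φ => q.ballLE p.1 p'.1)
            (fun j => q.d y j.1.1) (j := ⟨k, hk⟩) hik)

end IsIdeal

end Balls

end QuasiMetric

open QuasiMetric in
/-- every bounded ideal of `(X, d)` has a colimit iff every bounded forward
Cauchy net of `(X, d)` has a Yoneda limit. -/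
theorem stmt15 {X : Type u} (q : QuasiMetric X) :
    (∀ φ : X → ℝ≥0∞, q.IsIdeal φ → q.BoundedWeight φ → ∃ b, q.IsColimit φ b) ↔
      (∀ (D : Type u) (le : D → D → Prop), DirectedPre le → Nonempty D →
        ∀ x : D → X, q.ForwardCauchy le x →
          (∃ (a : X) (r : ℝ≥0), ∀ (z : X) (i : D), ∃ j, le i j ∧
            q.d z a ≤ (r : ℝ≥0∞) + q.d z (x j)) →
          ∃ a, q.IsYonedaLimit le x a) := by
  constructor
  · intro H D le hD _ x hx hB
    obtain ⟨b, hb⟩ := H _ (hx.isIdeal_netWeight hD) ((hx.boundedNet_iff hD.2.2).mp hB)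
    exact ⟨b, (hx.isYonedaLimit_iff_isColimit hD.2.2 b).mpr hb⟩
  · intro H φ hφ hφb
    have hx := hφ.forwardCauchy_ballsOf
    have hD := hφ.directedPre_ballsOf
    rw [← hφ.netWeight_ballsOf] at hφb ⊢
    obtain ⟨a, ha⟩ := H _ _ hD hx.nonempty _ hx ((hx.boundedNet_iff hD.2.2).mpr hφb)
    exact ⟨a, (hx.isYonedaLimit_iff_isColimit hD.2.2 a).mp ha⟩
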